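/- arXiv:1803.06846 — 2 statements merged into one kernel-verified Lean document; each statement's English description precedes it below -/
import Mathlib

section
/- Let T ⊂ ℝ^d be open with inscribed ball of radius r_T and contained in a ball of radius R_T ≤ ρ r_T, and set h_T = diam(T). Then for every polynomial v of degree ≤ k, one has ‖v‖_{L²(∂T)} ≤ (C/√h_T) ‖v‖_{L²(T)}, where C depends only on d, k, ρ and the constant ρ₃ in the surface-area bound |∂T| ≤ ρ₃ h_T^{d−1}. -/
open MeasureTheory Metric MvPolynomial

/-!
Polynomials of degree `≤ k` form a finite-dimensional space on which `v ↦ ‖v‖_{L²(B(0,1))}` is a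
norm (a polynomial vanishing on an open set is zero), so it dominates `sup_{B̄(0,2ρ)} |v|`. The
space is invariant under `y ↦ x₀ + r • y`, and rescaling gives the inverse estimate
`v(x)² ≤ C₀ r⁻ᵈ ‖v‖²_{L²(B(x₀,r))}` for `|x - x₀| ≤ 2ρr`. Since `∂T ⊆ B̄(x_in, 2ρr)` and
`2r ≤ h_T ≤ 2ρr`, integrating over `∂T` gives
`‖v‖²_{L²(∂T)} ≤ C₀ ρ₃ h_T^{d-1} r⁻ᵈ ‖v‖²_{L²(T)} ≤ C₀ ρ₃ (2ρ)ᵈ h_T⁻¹ ‖v‖²_{L²(T)}`.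
-/

theorem LinearMap.exists_norm_le_mul_norm_of_injective {𝕜 V F G : Type*}
    [NontriviallyNormedField 𝕜] [CompleteSpace 𝕜] [AddCommGroup V] [Module 𝕜 V]
    [FiniteDimensional 𝕜 V] [NormedAddCommGroup F] [NormedSpace 𝕜 F] [NormedAddCommGroup G]
    [NormedSpace 𝕜 G] {J : V →ₗ[𝕜] F} (hJ : Function.Injective J) (q : V →ₗ[𝕜] G) :
    ∃ C > 0, ∀ v, ‖q v‖ ≤ C * ‖J v‖ := by
  let e := LinearEquiv.ofInjective J hJ
  let L := LinearMap.toContinuousLinearMap (q ∘ₗ e.symm.toLinearMap)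
  refine ⟨‖L‖ + 1, by positivity, fun v => ?_⟩
  calc ‖q v‖ = ‖L (e v)‖ := by simp [L]
    _ ≤ ‖L‖ * ‖J v‖ := L.le_opNorm _
    _ ≤ (‖L‖ + 1) * ‖J v‖ := by gcongr; linarith

theorem MeasureTheory.Measure.setIntegral_ball_comp_add_smul {E F : Type*}
    [NormedAddCommGroup E] [NormedSpace ℝ E] [FiniteDimensional ℝ E] [MeasurableSpace E]
    [BorelSpace E] (μ : Measure E) [μ.IsAddHaarMeasure] [NormedAddCommGroup F] [NormedSpace ℝ F]
    (f : E → F) (x₀ : E) {r : ℝ} (hr : 0 < r) :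
    ∫ y in ball 0 1, f (x₀ + r • y) ∂μ = (r ^ Module.finrank ℝ E)⁻¹ • ∫ x in ball x₀ r, f x ∂μ := by
  rw [setIntegral_comp_smul_of_pos μ (fun z => f (x₀ + z)) _ hr, smul_unitBall_of_pos hr]
  have hpre : ball (0 : E) r = (x₀ + ·) ⁻¹' ball x₀ r := by simp [preimage_add_ball]
  rw [hpre, (measurePreserving_add_left μ x₀).setIntegral_preimage_emb
    (MeasurableEquiv.addLeft x₀).measurableEmbedding]

namespace MvPolynomial

theorem totalDegree_bind₁_le {σ τ R : Type*} [CommSemiring R] {g : σ → MvPolynomial τ R}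
    (hg : ∀ i, (g i).totalDegree ≤ 1) (v : MvPolynomial σ R) :
    (bind₁ g v).totalDegree ≤ v.totalDegree := by
  rw [bind₁, aeval_def, eval₂_eq]
  refine (totalDegree_finsetSum _ _).trans <| Finset.sup_le fun m hm => ?_
  refine (totalDegree_mul _ _).trans ?_
  rw [MvPolynomial.algebraMap_eq, totalDegree_C, zero_add]
  refine (totalDegree_finsetProd _ _).trans ?_
  calc ∑ i ∈ m.support, ((g i) ^ (m i)).totalDegree
      ≤ ∑ i ∈ m.support, m i :=
        Finset.sum_le_sum fun i _ => (totalDegree_pow _ _).trans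
          (by simpa using Nat.mul_le_mul_left (m i) (hg i))
    _ ≤ v.totalDegree := le_totalDegree hm

variable {d : ℕ}

noncomputable def affineSubst (x₀ : EuclideanSpace ℝ (Fin d)) (r : ℝ)
    (v : MvPolynomial (Fin d) ℝ) : MvPolynomial (Fin d) ℝ :=
  bind₁ (fun i => C (x₀ i) + C r * X i) v

theorem eval_affineSubst (x₀ : EuclideanSpace ℝ (Fin d)) (r : ℝ) (v : MvPolynomial (Fin d) ℝ)
    (y : EuclideanSpace ℝ (Fin d)) :
    eval (fun i => y i) (affineSubst x₀ r v) = eval (fun i => (x₀ + r • y) i) v := by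
  refine (eval₂Hom_bind₁ _ _ _ _).trans ?_
  show eval _ v = eval _ v
  congr 2 with i
  simp

theorem totalDegree_affineSubst_le (x₀ : EuclideanSpace ℝ (Fin d)) (r : ℝ)
    (v : MvPolynomial (Fin d) ℝ) : (affineSubst x₀ r v).totalDegree ≤ v.totalDegree :=
  totalDegree_bind₁_le (fun i => (totalDegree_add _ _).trans <| max_le
    (by rw [totalDegree_C]; exact zero_le_one)
    ((totalDegree_mul _ _).trans (by rw [totalDegree_C, totalDegree_X]))) v

theorem continuous_eval_euclidean (v : MvPolynomial (Fin d) ℝ) :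
    Continuous fun x : EuclideanSpace ℝ (Fin d) => eval (fun i => x i) v :=
  (continuous_eval v).comp (continuous_pi fun i => (EuclideanSpace.proj i).continuous)

theorem analyticOnNhd_eval_euclidean (v : MvPolynomial (Fin d) ℝ) :
    AnalyticOnNhd ℝ (fun x : EuclideanSpace ℝ (Fin d) => eval (fun i => x i) v) Set.univ := by
  simpa using AnalyticOnNhd.eval_continuousLinearMap' (𝕜 := ℝ)
    (fun i : Fin d => EuclideanSpace.proj (𝕜 := ℝ) i) v

theorem eq_zero_of_eval_ae_eq_zero {U : Set (EuclideanSpace ℝ (Fin d))} (hU : IsOpen U)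
    (hne : U.Nonempty) {v : MvPolynomial (Fin d) ℝ}
    (hv : (fun x : EuclideanSpace ℝ (Fin d) => eval (fun i => x i) v) =ᵐ[volume.restrict U] 0) :
    v = 0 := by
  obtain ⟨x, hx⟩ := hne
  have hloc : (fun y : EuclideanSpace ℝ (Fin d) => eval (fun i => y i) v) =ᶠ[nhds x] 0 :=
    Filter.eventually_of_mem (hU.mem_nhds hx) <|
      Measure.eqOn_open_of_ae_eq hv hU (continuous_eval_euclidean v).continuousOn
        continuousOn_const
  have hzero := (analyticOnNhd_eval_euclidean v).eqOn_zero_of_preconnected_of_eventuallyEq_zero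
    isPreconnected_univ (Set.mem_univ x) hloc
  refine MvPolynomial.funext fun u => ?_
  simpa using hzero (Set.mem_univ (WithLp.toLp 2 u))

theorem memLp_eval_euclidean {U : Set (EuclideanSpace ℝ (Fin d))} (hU : Bornology.IsBounded U)
    (v : MvPolynomial (Fin d) ℝ) :
    MemLp (fun x : EuclideanSpace ℝ (Fin d) => eval (fun i => x i) v) 2 (volume.restrict U) := by
  have : IsFiniteMeasure (volume.restrict (closure U)) :=
    isFiniteMeasure_restrict.2 hU.closure.measure_lt_top.ne
  obtain ⟨M, hM⟩ := hU.isCompact_closure.exists_bound_of_continuousOn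
    (continuous_eval_euclidean v).continuousOn
  refine (MemLp.of_bound (continuous_eval_euclidean v).aestronglyMeasurable M
    (ae_restrict_of_forall_mem isClosed_closure.measurableSet hM)).mono_measure
    (Measure.restrict_mono subset_closure le_rfl)

noncomputable def toL2 {U : Set (EuclideanSpace ℝ (Fin d))} (hU : Bornology.IsBounded U) :
    MvPolynomial (Fin d) ℝ →ₗ[ℝ] Lp ℝ 2 (volume.restrict U) where
  toFun v := (memLp_eval_euclidean hU v).toLp
  map_add' a b := by
    rw [← MemLp.toLp_add]
    exact MemLp.toLp_congr _ _ (.of_eq (by funext x; simp))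
  map_smul' c a := by
    rw [RingHom.id_apply, ← MemLp.toLp_const_smul]
    exact MemLp.toLp_congr _ _ (.of_eq (by funext x; simp [smul_eval]))

theorem norm_toL2_sq {U : Set (EuclideanSpace ℝ (Fin d))} (hU : Bornology.IsBounded U)
    (v : MvPolynomial (Fin d) ℝ) :
    ‖toL2 hU v‖ ^ 2 = ∫ x in U, eval (fun i => x i) v ^ 2 := by
  rw [← real_inner_self_eq_norm_sq, L2.inner_def]
  refine integral_congr_ae ?_
  filter_upwards [(memLp_eval_euclidean hU v).coeFn_toLp] with x hx
  simp [toL2, hx, sq]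

theorem toL2_injective {U : Set (EuclideanSpace ℝ (Fin d))} (hU : Bornology.IsBounded U)
    (hUo : IsOpen U) (hne : U.Nonempty) : Function.Injective (toL2 hU) := by
  refine (injective_iff_map_eq_zero _).2 fun v hv => eq_zero_of_eval_ae_eq_zero hUo hne ?_
  filter_upwards [(memLp_eval_euclidean hU v).coeFn_toLp, Lp.coeFn_zero ℝ 2 (volume.restrict U)]
    with x hx h0
  rw [← hx]
  exact (congrFun (congrArg (fun f : Lp ℝ 2 (volume.restrict U) => (f : _ → ℝ)) hv) x).trans h0

noncomputable def toContinuousMapOn (K : Set (EuclideanSpace ℝ (Fin d))) :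
    MvPolynomial (Fin d) ℝ →ₗ[ℝ] C(K, ℝ) where
  toFun v := ⟨fun x => eval (fun i => (x : EuclideanSpace ℝ (Fin d)) i) v,
    (continuous_eval_euclidean v).comp continuous_subtype_val⟩
  map_add' _ _ := by ext; simp
  map_smul' _ _ := by ext; simp [smul_eval]

theorem exists_sq_eval_le_mul_setIntegral_sq (k : ℕ) {U K : Set (EuclideanSpace ℝ (Fin d))}
    (hUo : IsOpen U) (hne : U.Nonempty) (hU : Bornology.IsBounded U) (hK : IsCompact K) :
    ∃ C > 0, ∀ v : MvPolynomial (Fin d) ℝ, v.totalDegree ≤ k → ∀ x ∈ K,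
      eval (fun i => x i) v ^ 2 ≤ C * ∫ y in U, eval (fun i => y i) v ^ 2 := by
  have : CompactSpace K := isCompact_iff_compactSpace.mp hK
  let P := restrictTotalDegree (Fin d) ℝ k
  obtain ⟨C, hC, hbound⟩ := LinearMap.exists_norm_le_mul_norm_of_injective
    (J := (toL2 hU).domRestrict P) ((toL2_injective hU hUo hne).comp Subtype.val_injective)
    ((toContinuousMapOn K).domRestrict P)
  refine ⟨C ^ 2, by positivity, fun v hv x hx => ?_⟩
  have hvP : v ∈ P := (mem_restrictTotalDegree _ _ _).2 hv
  have habs : |eval (fun i => x i) v| ≤ C * ‖toL2 hU v‖ :=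
    ((toContinuousMapOn K v).norm_coe_le_norm ⟨x, hx⟩).trans (hbound ⟨v, hvP⟩)
  rw [← norm_toL2_sq hU, ← sq_abs, ← mul_pow]
  exact pow_le_pow_left₀ (abs_nonneg _) habs 2

theorem exists_sq_eval_le_div_pow_mul_setIntegral_ball (k : ℕ) (s : ℝ) :
    ∃ C > 0, ∀ v : MvPolynomial (Fin d) ℝ, v.totalDegree ≤ k →
      ∀ (x₀ : EuclideanSpace ℝ (Fin d)) (r : ℝ), 0 < r → ∀ x ∈ closedBall x₀ (s * r),
        eval (fun i => x i) v ^ 2 ≤ C / r ^ d * ∫ y in ball x₀ r, eval (fun i => y i) v ^ 2 := by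
  obtain ⟨C, hC, href⟩ := exists_sq_eval_le_mul_setIntegral_sq k isOpen_ball
    (nonempty_ball.2 one_pos) isBounded_ball (isCompact_closedBall 0 s)
  refine ⟨C, hC, fun v hv x₀ r hr x hx => ?_⟩
  set y := r⁻¹ • (x - x₀)
  have hxy : x₀ + r • y = x := by simp [y, smul_inv_smul₀ hr.ne']
  have hy : y ∈ closedBall 0 s := by
    rw [mem_closedBall_zero_iff, norm_smul, norm_inv, Real.norm_of_nonneg hr.le,
      inv_mul_le_iff₀ hr, mul_comm, ← dist_eq_norm]
    exact hx
  have hscale : ∫ z in ball (0 : EuclideanSpace ℝ (Fin d)) 1,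
      eval (fun i => z i) (affineSubst x₀ r v) ^ 2
        = (r ^ d)⁻¹ * ∫ y in ball x₀ r, eval (fun i => y i) v ^ 2 := by
    simp_rw [eval_affineSubst]
    rw [Measure.setIntegral_ball_comp_add_smul volume (fun x => eval (fun i => x i) v ^ 2) x₀ hr,
      finrank_euclideanSpace_fin, smul_eq_mul]
  calc eval (fun i => x i) v ^ 2 = eval (fun i => y i) (affineSubst x₀ r v) ^ 2 := by
        rw [eval_affineSubst, hxy]
    _ ≤ C * ((r ^ d)⁻¹ * ∫ y in ball x₀ r, eval (fun i => y i) v ^ 2) :=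
        hscale ▸ href _ ((totalDegree_affineSubst_le x₀ r v).trans hv) y hy
    _ = C / r ^ d * ∫ y in ball x₀ r, eval (fun i => y i) v ^ 2 := by ring

end MvPolynomial

theorem frontier_subset_closedBall_of_subset_ball {X : Type*} [PseudoMetricSpace X] {T : Set X}
    {x c : X} {R : ℝ} (hsub : T ⊆ ball c R) (hx : x ∈ T) : frontier T ⊆ closedBall x (2 * R) :=
  frontier_subset_closure.trans <| (closure_mono hsub).trans <|
    closure_ball_subset_closedBall.trans <|
      closedBall_subset_closedBall' (by linarith [dist_comm c x, mem_ball.1 (hsub hx)])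

theorem setIntegral_frontier_sq_le_div_diam {d : ℕ} (hd : 0 < d)
    {T : Set (EuclideanSpace ℝ (Fin d))} {xin xc : EuclideanSpace ℝ (Fin d)} {r R ρ ρ₃ C₀ : ℝ}
    (hr : 0 < r) (hball : ball xin r ⊆ T) (hsub : T ⊆ ball xc R) (hRρ : R ≤ ρ * r)
    (hρ₃ : 0 ≤ ρ₃) (hC₀ : 0 ≤ C₀)
    (hμH : μH[(d : ℝ) - 1] (frontier T) ≤ ENNReal.ofReal (ρ₃ * diam T ^ (d - 1)))
    {f : EuclideanSpace ℝ (Fin d) → ℝ} (hf : Continuous f)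
    (hinv : ∀ x ∈ closedBall xin (2 * ρ * r), f x ^ 2 ≤ C₀ / r ^ d * ∫ y in ball xin r, f y ^ 2) :
    ∫ x in frontier T, f x ^ 2 ∂μH[(d : ℝ) - 1]
      ≤ C₀ * ρ₃ * (2 * ρ) ^ d / diam T * ∫ x in T, f x ^ 2 := by
  have : Nonempty (Fin d) := ⟨⟨0, hd⟩⟩
  set h := diam T
  set I := ∫ x in T, f x ^ 2
  have hxin : xin ∈ T := hball (mem_ball_self hr)
  have hR : 0 < R := dist_nonneg.trans_lt (hsub hxin)
  have hTb : Bornology.IsBounded T := isBounded_ball.subset hsub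
  have h2r : 2 * r ≤ h := (diam_ball_eq xin hr.le).symm.le.trans (diam_mono hball hTb)
  have hh : 0 < h := by linarith
  have hhρ : h ≤ 2 * ρ * r := by
    linarith [(diam_mono hsub isBounded_ball).trans (diam_ball (x := xc) hR.le)]
  have hfr : frontier T ⊆ closedBall xin (2 * ρ * r) :=
    (frontier_subset_closedBall_of_subset_ball hsub hxin).trans
      (closedBall_subset_closedBall (by linarith))
  have hI : ∫ y in ball xin r, f y ^ 2 ≤ I :=
    setIntegral_mono_set ((hf.pow 2).continuousOn.integrableOn_compact
      (isCompact_closedBall xc R) |>.mono_set (hsub.trans ball_subset_closedBall))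
      (.of_forall fun _ => sq_nonneg _) hball.eventuallyLE
  have hbound : ∀ x ∈ frontier T, ‖f x ^ 2‖ ≤ C₀ / r ^ d * I := fun x hx => by
    rw [Real.norm_of_nonneg (sq_nonneg _)]
    exact (hinv x (hfr hx)).trans (by gcongr)
  have hmeas : μH[(d : ℝ) - 1].real (frontier T) ≤ ρ₃ * h ^ (d - 1) :=
    ENNReal.toReal_le_of_le_ofReal (by positivity) hμH
  have hpow : h ^ (d - 1) / r ^ d ≤ (2 * ρ) ^ d / h := by
    rw [div_le_div_iff₀ (by positivity) hh, ← pow_succ, Nat.sub_add_cancel hd, ← mul_pow]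
    gcongr
  have hI0 : 0 ≤ I := setIntegral_nonneg_of_ae (.of_forall fun _ => sq_nonneg _)
  calc ∫ x in frontier T, f x ^ 2 ∂μH[(d : ℝ) - 1]
      ≤ C₀ / r ^ d * I * μH[(d : ℝ) - 1].real (frontier T) :=
        (le_abs_self _).trans (norm_setIntegral_le_of_norm_le_const
          (hμH.trans_lt ENNReal.ofReal_lt_top) hbound)
    _ ≤ C₀ / r ^ d * I * (ρ₃ * h ^ (d - 1)) := by gcongr
    _ = C₀ * ρ₃ * I * (h ^ (d - 1) / r ^ d) := by ring
    _ ≤ C₀ * ρ₃ * I * ((2 * ρ) ^ d / h) := by gcongr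
    _ = C₀ * ρ₃ * (2 * ρ) ^ d / h * I := by ring

/-- trace inverse inequality ‖v‖_{L²(∂T)} ≤ (C/√h_T)‖v‖_{L²(T)} for
polynomials of degree ≤ k on a shape-regular cell T with |∂T| ≤ ρ₃ h_T^{d-1}.
The boundary norm uses the (d-1)-dimensional Hausdorff measure on ∂T. -/
theorem stmt1 (d k : ℕ) (ρ ρ₃ : ℝ) (hρ : 1 ≤ ρ) (hρ₃ : 0 < ρ₃) :
    ∃ C > (0 : ℝ),
      ∀ (T : Set (EuclideanSpace ℝ (Fin d))) (xin xc : EuclideanSpace ℝ (Fin d)) (r R : ℝ),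
        IsOpen T → 0 < r → Metric.ball xin r ⊆ T → T ⊆ Metric.ball xc R → R ≤ ρ * r →
        μH[(d : ℝ) - 1] (frontier T) ≤ ENNReal.ofReal (ρ₃ * (Metric.diam T) ^ (d - 1)) →
        ∀ v : MvPolynomial (Fin d) ℝ, v.totalDegree ≤ k →
          (∫ x in frontier T, (MvPolynomial.eval (fun i => x i) v) ^ 2 ∂μH[(d : ℝ) - 1]) ^ ((1:ℝ)/2)
            ≤ (C / Real.sqrt (Metric.diam T)) *
              (∫ x in T, (MvPolynomial.eval (fun i => x i) v) ^ 2) ^ ((1:ℝ)/2) := by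
  obtain ⟨C₀, hC₀, hinv⟩ := exists_sq_eval_le_div_pow_mul_setIntegral_ball (d := d) k (2 * ρ)
  have hρ0 : 0 < ρ := by linarith
  refine ⟨Real.sqrt (C₀ * ρ₃ * (2 * ρ) ^ d), by positivity, ?_⟩
  intro T xin xc r R _ hr hball hsub hRρ hμH v hv
  simp only [← Real.sqrt_eq_rpow]
  rcases Nat.eq_zero_or_pos d with rfl | hd
  · have hT : T = Set.univ := Set.eq_univ_of_forall fun y =>
      Subsingleton.elim xin y ▸ hball (mem_ball_self hr)
    rw [hT, frontier_univ, Measure.restrict_empty, integral_zero_measure, Real.sqrt_zero]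
    positivity
  · have hsq := setIntegral_frontier_sq_le_div_diam hd hr hball hsub hRρ hρ₃.le hC₀.le hμH
      (continuous_eval_euclidean v) (hinv v hv xin r hr)
    calc _ ≤ Real.sqrt (C₀ * ρ₃ * (2 * ρ) ^ d / diam T * ∫ x in T, eval (fun i => x i) v ^ 2) :=
          Real.sqrt_le_sqrt hsq
      _ = _ := by rw [Real.sqrt_mul' _ ?_, Real.sqrt_div' _ diam_nonneg]; positivity
end

section
/- Let B_in ⊂ ℝ^d be a ball of radius r centered at x₀ and χ(x) = |x−x₀|² − r². For any polynomial v of degree ≤ k−2, if the polynomial w = χ v satisfies ∑_{i,j} A_{ij} ∂_i ∂_j w = 0 identically on B_in for some constant symmetric positive definite matrix A, then v = 0. -/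
/-!
A polynomial vanishing on a ball vanishes identically, so `L_A (χ v) = 0` as a polynomial, where
`L_A = ∑ A_ij ∂_i ∂_j`. Since `A` is positive definite, `A = (S Sᵀ)²` for an invertible `S`.
Under the substitution `σ : g ↦ g(S x)` the operator `L_A` turns into `L_M` with `M = Sᵀ S`, and
`|x|²` turns into the quadratic form `Q_M` of the same matrix. For the Fischer pairing
`⟨f, g⟩ = ∑_α α! f_α g_α`, multiplication by `x_i` is adjoint to `∂_i`, so multiplication by
`Q_M` is adjoint to `L_M`.

Write `χ = |x|² + ℓ` with `deg ℓ ≤ 1` and let `p ≠ 0` be the top homogeneous component of `v`.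
Then `f = σ(|x|² p)` is homogeneous of degree `deg v + 2`, and
`⟨f, σ(χ v)⟩ = ⟨σ p, L_M σ(χ v)⟩ = ⟨σ p, σ(L_A (χ v))⟩ = 0`. On the other hand `σ(χ v) - f` has
lower degree, hence is orthogonal to `f`, so `⟨f, σ(χ v)⟩ = ⟨f, f⟩ > 0`.
-/

open MvPolynomial Metric
open scoped Matrix

namespace MvPolynomial

theorem sum_support_eq_of_subset {σ R M : Type*} [CommSemiring R] [AddCommMonoid M]
    {f : MvPolynomial σ R} {s : Finset (σ →₀ ℕ)} (hs : f.support ⊆ s) (w : (σ →₀ ℕ) → R → M)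
    (hw : ∀ α, w α 0 = 0) : ∑ α ∈ f.support, w α (coeff α f) = ∑ α ∈ s, w α (coeff α f) :=
  Finset.sum_subset hs fun α _ hα => by rw [notMem_support_iff.mp hα, hw]

section Operators

variable {σ R : Type*} [Fintype σ] [CommSemiring R]

variable (R) in
noncomputable def quadForm (M : Matrix σ σ R) : MvPolynomial σ R :=
  ∑ i, ∑ j, C (M i j) * (X i * X j)

noncomputable def secondOrderOp [DecidableEq σ] (M : Matrix σ σ R) (g : MvPolynomial σ R) :
    MvPolynomial σ R :=
  ∑ i, ∑ j, C (M i j) * pderiv i (pderiv j g)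

theorem isHomogeneous_quadForm (M : Matrix σ σ R) : (quadForm R M).IsHomogeneous 2 :=
  IsHomogeneous.sum _ _ _ fun i _ => IsHomogeneous.sum _ _ _ fun j _ =>
    ((isHomogeneous_X R i).mul (isHomogeneous_X R j)).C_mul _

theorem quadForm_one [DecidableEq σ] : quadForm R (1 : Matrix σ σ R) = ∑ i, X i ^ 2 := by
  simp [quadForm, Matrix.one_apply, sq]

theorem quadForm_one_ne_zero [DecidableEq σ] [CharZero R] [Nonempty σ] :
    quadForm R (1 : Matrix σ σ R) ≠ 0 := by
  refine ne_of_apply_ne (eval fun _ => 1) ?_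
  simp [quadForm_one, Fintype.card_ne_zero]

end Operators

section Fischer

variable {σ R : Type*} [Fintype σ] [CommSemiring R]

variable (R) in
noncomputable def factorialWeight (α : σ →₀ ℕ) : R := ∏ i, ((α i).factorial : R)

variable (σ R) in
noncomputable def fischerForm : LinearMap.BilinForm R (MvPolynomial σ R) := by
  classical
  exact LinearMap.mk₂ R
    (fun f g => ∑ α ∈ f.support, factorialWeight R α * coeff α f * coeff α g)
    (fun f₁ f₂ g => by
      have key := fun (f : MvPolynomial σ R) (hf : f.support ⊆ f₁.support ∪ f₂.support) =>
        sum_support_eq_of_subset hf (fun α a => factorialWeight R α * a * coeff α g)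
          (fun _ => by ring)
      rw [key _ support_add, key _ Finset.subset_union_left, key _ Finset.subset_union_right,
        ← Finset.sum_add_distrib]
      exact Finset.sum_congr rfl fun _ _ => by rw [coeff_add]; ring)
    (fun c f g => by
      rw [sum_support_eq_of_subset support_smul (fun α a => factorialWeight R α * a * coeff α g)
          (fun _ => by ring), smul_eq_mul, Finset.mul_sum]
      exact Finset.sum_congr rfl fun _ _ => by rw [coeff_smul, smul_eq_mul]; ring)
    (fun f g₁ g₂ => by
      simp only [coeff_add, mul_add, Finset.sum_add_distrib])
    (fun c f g => by
      simp only [coeff_smul, smul_eq_mul, Finset.mul_sum]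
      exact Finset.sum_congr rfl fun _ _ => by ring)

theorem fischerForm_apply (f g : MvPolynomial σ R) :
    fischerForm σ R f g = ∑ α ∈ f.support, factorialWeight R α * coeff α f * coeff α g :=
  rfl

theorem fischerForm_monomial_left (β : σ →₀ ℕ) (b : R) (g : MvPolynomial σ R) :
    fischerForm σ R (monomial β b) g = factorialWeight R β * b * coeff β g := by
  classical
  rw [fischerForm_apply, sum_support_eq_of_subset support_monomial_subset
    (fun α a => factorialWeight R α * a * coeff α g) (fun _ => by ring), Finset.sum_singleton,
    coeff_monomial, if_pos rfl]

theorem factorialWeight_add_single [DecidableEq σ] (β : σ →₀ ℕ) (i : σ) :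
    factorialWeight R (β + Finsupp.single i 1) = (β i + 1) * factorialWeight R β := by
  unfold factorialWeight
  rw [← Finset.mul_prod_erase _ _ (Finset.mem_univ i),
    ← Finset.mul_prod_erase _ _ (Finset.mem_univ i), Finset.prod_congr rfl fun j hj => by
      rw [Finsupp.add_apply, Finsupp.single_eq_of_ne (Finset.ne_of_mem_erase hj), add_zero]]
  simp [Nat.factorial_succ]
  ring

theorem fischerForm_X_mul_left [DecidableEq σ] (i : σ) (f g : MvPolynomial σ R) :
    fischerForm σ R (X i * f) g = fischerForm σ R f (pderiv i g) := by
  induction f using MvPolynomial.induction_on' with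
  | add p q hp hq =>
    rw [mul_add, map_add, map_add, LinearMap.add_apply, LinearMap.add_apply, hp, hq]
  | monomial β b =>
    rw [← pow_one (X i), ← monomial_single_add, add_comm, fischerForm_monomial_left,
      fischerForm_monomial_left, coeff_pderiv, factorialWeight_add_single]
    ring

theorem fischerForm_quadForm_mul_left [DecidableEq σ] (M : Matrix σ σ R)
    (f g : MvPolynomial σ R) :
    fischerForm σ R (quadForm R M * f) g = fischerForm σ R f (secondOrderOp M g) := by
  simp only [quadForm, secondOrderOp, Finset.sum_mul, map_sum, LinearMap.sum_apply,
    C_mul', smul_mul_assoc, map_smul, LinearMap.smul_apply]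
  refine Finset.sum_congr rfl fun i _ => Finset.sum_congr rfl fun j _ => ?_
  rw [mul_comm (X i), mul_assoc, fischerForm_X_mul_left, fischerForm_X_mul_left]

theorem fischerForm_eq_zero_of_totalDegree_lt {f g : MvPolynomial σ R} {m : ℕ}
    (hf : f.IsHomogeneous m) (hg : g.totalDegree < m) : fischerForm σ R f g = 0 := by
  rw [fischerForm_apply]
  refine Finset.sum_eq_zero fun α hα => ?_
  have hα : Finsupp.weight 1 α = m := hf (mem_support_iff.mp hα)
  have hg' : g.totalDegree < α.degree := by
    rwa [Finsupp.degree_eq_weight_one, ← Pi.one_def, hα]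
  rw [coeff_eq_zero_of_totalDegree_lt hg', mul_zero]

theorem factorialWeight_pos [PartialOrder R] [IsStrictOrderedRing R] (α : σ →₀ ℕ) :
    0 < factorialWeight R α :=
  Finset.prod_pos fun _ _ => Nat.cast_pos.mpr (Nat.factorial_pos _)

theorem fischerForm_self_pos {K : Type*} [CommRing K] [LinearOrder K] [IsStrictOrderedRing K]
    {f : MvPolynomial σ K} (hf : f ≠ 0) : 0 < fischerForm σ K f f := by
  obtain ⟨α, hα⟩ := support_nonempty.mpr hf
  refine Finset.sum_pos' (fun β _ => ?_) ⟨α, hα, ?_⟩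
  · rw [mul_assoc]
    exact mul_nonneg (factorialWeight_pos β).le (mul_self_nonneg _)
  · rw [mul_assoc]
    exact mul_pos (factorialWeight_pos α) (mul_self_pos.mpr (mem_support_iff.mp hα))

end Fischer

section LinSubst

variable {σ R : Type*} [Fintype σ] [CommSemiring R]

noncomputable def linSubst (S : Matrix σ σ R) : MvPolynomial σ R →ₐ[R] MvPolynomial σ R :=
  aeval fun i => ∑ j, C (S i j) * X j

theorem linSubst_X (S : Matrix σ σ R) (i : σ) : linSubst S (X i) = ∑ j, C (S i j) * X j :=
  aeval_X _ _

theorem linSubst_C (S : Matrix σ σ R) (a : R) : linSubst S (C a) = C a :=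
  aeval_C _ _

theorem linSubst_linSubst (S T : Matrix σ σ R) (g : MvPolynomial σ R) :
    linSubst T (linSubst S g) = linSubst (S * T) g := by
  change ((linSubst T).comp (linSubst S)) g = _
  congr 1
  refine algHom_ext fun i => ?_
  simp only [AlgHom.comp_apply, linSubst_X, map_sum, map_mul, linSubst_C, Finset.mul_sum,
    Matrix.mul_apply, Finset.sum_mul, ← mul_assoc]
  exact Finset.sum_comm

theorem linSubst_one [DecidableEq σ] (g : MvPolynomial σ R) : linSubst 1 g = g := by
  change linSubst 1 g = AlgHom.id R _ g
  congr 1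
  refine algHom_ext fun i => ?_
  simp [linSubst_X, Matrix.one_apply]

theorem linSubst_injective [DecidableEq σ] {S : Matrix σ σ R} (hS : IsUnit S) :
    Function.Injective (linSubst S) := by
  obtain ⟨T, hT⟩ := hS.exists_right_inv
  exact Function.LeftInverse.injective (g := linSubst T) fun g => by
    rw [linSubst_linSubst, hT, linSubst_one]

theorem pderiv_linSubst [DecidableEq σ] (S : Matrix σ σ R) (k : σ) (g : MvPolynomial σ R) :
    pderiv k (linSubst S g) = ∑ l, C (S l k) * linSubst S (pderiv l g) := by
  induction g using MvPolynomial.induction_on with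
  | C a => simp
  | add p q hp hq => simp only [map_add, hp, hq, mul_add, Finset.sum_add_distrib]
  | mul_X p n ih =>
    have hX : pderiv k (linSubst S (X n)) = C (S n k) := by
      simp [linSubst_X, pderiv_X, Pi.single_apply]
    simp only [map_mul, pderiv_mul, ih, hX, map_add, mul_add, Finset.sum_add_distrib,
      Finset.sum_mul, mul_assoc, pderiv_X, Pi.single_apply, mul_ite, mul_one, mul_zero]
    simp [apply_ite, mul_comm]

theorem secondOrderOp_linSubst [DecidableEq σ] (B S : Matrix σ σ R) (g : MvPolynomial σ R) :
    secondOrderOp B (linSubst S g) = linSubst S (secondOrderOp (S * B * Sᵀ) g) := by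
  rw [Matrix.mul_assoc]
  simp only [secondOrderOp, pderiv_linSubst, map_sum, pderiv_C_mul, Finset.mul_sum, map_mul,
    linSubst_C, Matrix.mul_apply, Matrix.transpose_apply, Finset.sum_mul, ← mul_assoc]
  calc _ = ∑ k, ∑ l, ∑ k', ∑ m,
        C (B k k') * C (S m k') * C (S l k) * linSubst S (pderiv l (pderiv m g)) :=
        Finset.sum_congr rfl fun _ _ => Finset.sum_comm_cycle
    _ = ∑ l, ∑ k, ∑ k', ∑ m,
        C (B k k') * C (S m k') * C (S l k) * linSubst S (pderiv l (pderiv m g)) :=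
        Finset.sum_comm
    _ = _ := Finset.sum_congr rfl fun _ _ => Finset.sum_comm_cycle.trans (by
        simp only [mul_comm, mul_left_comm])

theorem linSubst_quadForm (S N : Matrix σ σ R) :
    linSubst S (quadForm R N) = quadForm R (Sᵀ * N * S) := by
  rw [Matrix.mul_assoc]
  simp only [quadForm, map_sum, map_mul, linSubst_C, linSubst_X, Finset.mul_sum,
    Matrix.mul_apply, Matrix.transpose_apply, Finset.sum_mul, ← mul_assoc]
  calc _ = ∑ i, ∑ a, ∑ j, ∑ b, C (N i j) * C (S i a) * X a * C (S j b) * X b :=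
        Finset.sum_congr rfl fun _ _ => Finset.sum_comm_cycle
    _ = ∑ a, ∑ i, ∑ j, ∑ b, C (N i j) * C (S i a) * X a * C (S j b) * X b :=
        Finset.sum_comm
    _ = _ := Finset.sum_congr rfl fun _ _ => Finset.sum_comm_cycle.trans (by
        simp only [mul_comm, mul_left_comm])

theorem IsHomogeneous.linSubst {g : MvPolynomial σ R} {n : ℕ} (hg : g.IsHomogeneous n)
    (S : Matrix σ σ R) : (linSubst S g).IsHomogeneous n := by
  have h := hg.aeval (fun i => ∑ j, C (S i j) * X j) fun i =>
    IsHomogeneous.sum _ _ _ fun j _ => isHomogeneous_C_mul_X (S i j) j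
  rwa [one_mul] at h

theorem totalDegree_linSubst_le (S : Matrix σ σ R) (g : MvPolynomial σ R) :
    (linSubst S g).totalDegree ≤ g.totalDegree := by
  conv_lhs => rw [← sum_homogeneousComponent g]
  rw [map_sum]
  refine totalDegree_finsetSum_le fun i hi => ?_
  exact ((homogeneousComponent_isHomogeneous i g).linSubst S).totalDegree_le.trans
    (Nat.lt_succ_iff.mp (Finset.mem_range.mp hi))

end LinSubst

theorem homogeneousComponent_totalDegree_ne_zero {σ R : Type*} [CommSemiring R]
    {v : MvPolynomial σ R} (hv : v ≠ 0) : homogeneousComponent v.totalDegree v ≠ 0 := by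
  obtain ⟨α, hα, hdeg⟩ := Finset.exists_mem_eq_sup v.support (support_nonempty.mpr hv)
    fun α => α.sum fun _ e => e
  refine ne_of_apply_ne (coeff α) ?_
  rw [coeff_homogeneousComponent, if_pos (show α.degree = v.totalDegree from hdeg.symm),
    coeff_zero]
  exact mem_support_iff.mp hα

theorem totalDegree_mul_sum_range_homogeneousComponent_le {σ R : Type*} [CommSemiring R]
    {f : MvPolynomial σ R} {m : ℕ} (hf : f.IsHomogeneous m) (v : MvPolynomial σ R) (n : ℕ) :
    (f * ∑ i ∈ Finset.range n, homogeneousComponent i v).totalDegree ≤ m + n - 1 := by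
  rw [Finset.mul_sum]
  refine totalDegree_finsetSum_le fun i hi => ?_
  have hi := Finset.mem_range.mp hi
  exact (hf.mul (homogeneousComponent_isHomogeneous i v)).totalDegree_le.trans (by omega)

theorem eq_zero_of_secondOrderOp_mul_eq_zero {σ K : Type*} [Fintype σ] [DecidableEq σ]
    [Nonempty σ] [Field K] [LinearOrder K] [IsStrictOrderedRing K] {S : Matrix σ σ K}
    (hS : IsUnit S) {ℓ v : MvPolynomial σ K} (hℓ : ℓ.totalDegree ≤ 1)
    (h : secondOrderOp ((S * Sᵀ) ^ 2) ((quadForm K 1 + ℓ) * v) = 0) : v = 0 := by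
  by_contra hv
  set p := homogeneousComponent v.totalDegree v
  set w := ∑ i ∈ Finset.range v.totalDegree, homogeneousComponent i v
  set f := linSubst S (quadForm K 1 * p) with hf_def
  have hf : f ≠ 0 := (map_ne_zero_iff _ (linSubst_injective hS)).mpr
    (mul_ne_zero quadForm_one_ne_zero (homogeneousComponent_totalDegree_ne_zero hv))
  have hf_hom : f.IsHomogeneous (2 + v.totalDegree) :=
    ((isHomogeneous_quadForm 1).mul (homogeneousComponent_isHomogeneous _ v)).linSubst S
  have h_adjoint : fischerForm σ K f (linSubst S ((quadForm K 1 + ℓ) * v)) = 0 := by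
    rw [hf_def, map_mul, linSubst_quadForm, fischerForm_quadForm_mul_left,
      secondOrderOp_linSubst, show S * (Sᵀ * 1 * S) * Sᵀ = (S * Sᵀ) ^ 2 by
        simp [sq, Matrix.mul_assoc], h, map_zero, map_zero]
  have h_split : (quadForm K 1 + ℓ) * v = quadForm K 1 * p + (quadForm K 1 * w + ℓ * v) := by
    have hv_split : v = w + p := (sum_homogeneousComponent v).symm.trans (Finset.sum_range_succ _ _)
    rw [hv_split]
    ring
  have h_low : (quadForm K 1 * w + ℓ * v).totalDegree < 2 + v.totalDegree := by
    have h₁ : (quadForm K 1 * w).totalDegree ≤ 2 + v.totalDegree - 1 :=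
      totalDegree_mul_sum_range_homogeneousComponent_le (isHomogeneous_quadForm 1) v _
    have h₂ := (totalDegree_mul ℓ v).trans (Nat.add_le_add_right hℓ _)
    refine (totalDegree_add _ _).trans_lt (max_lt ?_ ?_) <;> omega
  rw [h_split, map_add, map_add, fischerForm_eq_zero_of_totalDegree_lt hf_hom
    ((totalDegree_linSubst_le S _).trans_lt h_low), add_zero] at h_adjoint
  exact (fischerForm_self_pos hf).ne' h_adjoint

theorem totalDegree_sum_sq_X_sub_C_sub_C_sub_sum_sq_X_le {σ R : Type*} [Fintype σ] [CommRing R]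
    (c : σ → R) (ρ : R) :
    (∑ i, (X i - C (c i)) ^ 2 - C ρ - ∑ i, X i ^ 2).totalDegree ≤ 1 := by
  rw [sub_right_comm, ← Finset.sum_sub_distrib]
  refine (totalDegree_sub_C_le _ _).trans (totalDegree_finsetSum_le fun i _ => ?_)
  rw [show (X i - C (c i)) ^ 2 - X i ^ 2 = C (c i ^ 2) - C (2 * c i) * X i by
    rw [map_pow, map_mul, map_ofNat]; ring, C_mul_X_eq_monomial]
  exact (totalDegree_sub _ _).trans (max_le ((totalDegree_C _).trans_le zero_le_one)
    ((totalDegree_monomial_le _ _).trans (by simp)))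

theorem eq_zero_of_isOpen_of_eval_eq_zero {𝕜 ι : Type*} [NontriviallyNormedField 𝕜] [Fintype ι]
    {U : Set (ι → 𝕜)} (hU : IsOpen U) (hne : U.Nonempty) {p : MvPolynomial ι 𝕜}
    (h : ∀ x ∈ U, eval x p = 0) : p = 0 := by
  obtain ⟨x, hx⟩ := hne
  obtain ⟨ε, hε, hball⟩ := Metric.isOpen_iff.mp hU x hx
  refine funext_set (fun i => ball (x i) ε)
    (fun i => infinite_of_mem_nhds (x i) (ball_mem_nhds _ hε)) fun y hy => ?_
  rw [h y (hball (by rwa [ball_pi x hε])), map_zero]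

end MvPolynomial

theorem Matrix.PosDef.exists_isUnit_mul_transpose_sq_eq {n : Type*} [Fintype n]
    [DecidableEq n] {A : Matrix n n ℝ} (hA : A.PosDef) :
    ∃ S : Matrix n n ℝ, IsUnit S ∧ (S * Sᵀ) ^ 2 = A := by
  set U : Matrix n n ℝ := (hA.1.eigenvectorUnitary : Matrix n n ℝ)
  have hUU : Uᵀ * U = 1 := by
    simpa [U, Matrix.star_eq_conjTranspose] using
      Matrix.mem_unitaryGroup_iff'.mp hA.1.eigenvectorUnitary.2
  have hA_eq : A = U * diagonal hA.1.eigenvalues * Uᵀ := by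
    conv_lhs => rw [hA.1.spectral_theorem, Unitary.conjStarAlgAut_apply]
    simp [U, Matrix.star_eq_conjTranspose]
  set D := diagonal fun i => √√(hA.1.eigenvalues i)
  have hD : D * D * (D * D) = diagonal hA.1.eigenvalues := by
    simp only [D, diagonal_mul_diagonal]
    congr 1
    funext i
    rw [Real.mul_self_sqrt (Real.sqrt_nonneg _), Real.mul_self_sqrt (hA.eigenvalues_pos i).le]
  have hSS : (U * D * (U * D)ᵀ) ^ 2 = A := by
    rw [hA_eq, ← hD, sq]
    simp only [transpose_mul, D, diagonal_transpose, Matrix.mul_assoc]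
    rw [← Matrix.mul_assoc Uᵀ U, hUU, Matrix.one_mul]
  refine ⟨U * D, ?_, hSS⟩
  rw [isUnit_iff_isUnit_det, isUnit_iff_ne_zero]
  intro h0
  have := hA.det_pos
  simp [← hSS, det_mul, h0] at this

theorem stmt16_general (d : ℕ) (hd : 0 < d)
    (x₀ : EuclideanSpace ℝ (Fin d)) (r : ℝ) (hr : 0 < r)
    (A : Matrix (Fin d) (Fin d) ℝ) (hA : A.PosDef)
    (v : MvPolynomial (Fin d) ℝ)
    (hw : ∀ x ∈ Metric.ball x₀ r,
      MvPolynomial.eval (fun i => x i)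
        (∑ i, ∑ j, MvPolynomial.C (A i j) *
          MvPolynomial.pderiv i (MvPolynomial.pderiv j
            (((∑ i, (MvPolynomial.X i - MvPolynomial.C (x₀ i)) ^ 2)
                - MvPolynomial.C (r ^ 2)) * v))) = 0) :
    v = 0 := by
  have : Nonempty (Fin d) := ⟨⟨0, hd⟩⟩
  have hL : secondOrderOp A ((∑ i, (X i - C (x₀ i)) ^ 2 - C (r ^ 2)) * v) = 0 :=
    eq_zero_of_isOpen_of_eval_eq_zero (U := {y | WithLp.toLp 2 y ∈ ball x₀ r})
      (isOpen_ball.preimage (PiLp.continuous_toLp 2 _)) ⟨x₀.ofLp, by simpa using hr⟩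
      fun y hy => hw _ hy
  obtain ⟨S, hS, hSA⟩ := hA.exists_isUnit_mul_transpose_sq_eq
  refine eq_zero_of_secondOrderOp_mul_eq_zero hS
    (ℓ := ∑ i, (X i - C (x₀ i)) ^ 2 - C (r ^ 2) - quadForm ℝ 1) ?_ ?_
  · rw [quadForm_one]
    exact totalDegree_sum_sq_X_sub_C_sub_C_sub_sum_sq_X_le _ _
  · rwa [add_sub_cancel, hSA]

/-- kernel triviality in Lemma 2: if w = χv (with
χ(x) = |x−x₀|² − r² vanishing on ∂B_in) satisfies ∑ A_{ij}∂_i∂_j w = 0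
identically on the ball B_in for a constant symmetric positive definite A,
then the polynomial v is zero. -/
theorem stmt16 (d k : ℕ) (hd : 0 < d) (hk : 2 ≤ k)
    (x₀ : EuclideanSpace ℝ (Fin d)) (r : ℝ) (hr : 0 < r)
    (A : Matrix (Fin d) (Fin d) ℝ) (hA : A.PosDef)
    (v : MvPolynomial (Fin d) ℝ) (hv : v.totalDegree ≤ k - 2)
    (hw : ∀ x ∈ Metric.ball x₀ r,
      MvPolynomial.eval (fun i => x i)
        (∑ i, ∑ j, MvPolynomial.C (A i j) *
          MvPolynomial.pderiv i (MvPolynomial.pderiv j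
            (((∑ i, (MvPolynomial.X i - MvPolynomial.C (x₀ i)) ^ 2)
                - MvPolynomial.C (r ^ 2)) * v))) = 0) :
    v = 0 :=
  stmt16_general d hd x₀ r hr A hA v hw
end
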